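/- For each n ≥ 1, the polynomial A_n(x) = Σ_{j=0}^{n} JS_γ(n,j) x^j (with γ > 0 a fixed real number) has only real, simple, non-positive zeros, and A_n(0) = 0; consequently A_n satisfies the recurrence A_n(x) = x(A_{n-1}(x) + 2γ A'_{n-1}(x) + x A''_{n-1}(x)). -/

import Mathlib

/-- Jacobi-Stirling numbers of the second kind, defined by the triangular
recurrence and initial conditions. -/
def JS (γ : ℝ) : ℕ → ℕ → ℝ
  | 0, 0 => 1
  | _ + 1, 0 => 0
  | 0, _ + 1 => 0
  | n + 1, j + 1 => JS γ n j + ((j : ℝ) + 1) * (((j : ℝ) + 1) + 2 * γ - 1) * JS γ n (j + 1)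

/-- The horizontal generating polynomial `A_n(x) = Σ_{j=0}^{n} JS_γ(n,j) x^j`. -/
noncomputable def A (γ : ℝ) (n : ℕ) : Polynomial ℝ :=
  ∑ j ∈ Finset.range (n + 1), Polynomial.C (JS γ n j) * Polynomial.X ^ j

/-!
By induction, `A_n = ∏ (X - s_i)` with `0 ≥ s_0 > ⋯ > s_{n-1}`, and `A_{n+1} = X · L A_n`
where `L p = p + 2γ p' + X p''` (`jacobiStirlingOp`). Let `f` be monic of degree `M` with such
roots. By Rolle, `f' = M ∏ (X - t_k)` with `t_k ∈ (s_{k+1}, s_k)`. At `t_k` we have `f' = 0`,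
while `f` and `t_k f''` both have sign `(-1)^(k+1)`; at `0`, `L f = f + 2γ f' > 0`; and near
`-∞` the monic polynomial `L f` of degree `M` has sign `(-1)^M`. So `L f` changes sign `M` times
along `0 > t_0 > ⋯ > t_{M-2} > -∞`, which accounts for all its `M` roots: they are simple and
negative.
-/

open Polynomial Finset Filter

theorem Polynomial.eval_derivative_prod_X_sub_C {R ι : Type*} [CommRing R] [DecidableEq ι]
    {S : Finset ι} {a : ι → R} {i : ι} (hi : i ∈ S) :
    (derivative (∏ j ∈ S, (X - C (a j)))).eval (a i) = ∏ j ∈ S.erase i, (a i - a j) := by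
  rw [← mul_prod_erase S _ hi, derivative_mul]
  simp [eval_prod]

theorem Polynomial.eq_C_coeff_mul_prod_of_isRoot {R : Type*} [CommRing R] [IsDomain R]
    {p : R[X]} {m : ℕ} (hp : p.natDegree ≤ m) {r : ℕ → R} (hr : Set.InjOn r (Set.Iio m))
    (hroot : ∀ i < m, p.IsRoot (r i)) :
    p = C (p.coeff m) * ∏ i ∈ range m, (X - C (r i)) := by
  rcases eq_or_ne p 0 with rfl | hp0
  · simp
  set S := (range m).val.map r
  have hS : S.Nodup := (range m).nodup.map_on fun i hi j hj => hr (mem_range.1 hi) (mem_range.1 hj)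
  have hS_le : S ≤ p.roots := (Multiset.le_iff_subset hS).2 fun x hx => by
    obtain ⟨i, hi, rfl⟩ := Multiset.mem_map.1 hx
    exact (mem_roots hp0).2 (hroot i (mem_range.1 hi))
  have hroots : S = p.roots :=
    Multiset.eq_of_le_of_card_le hS_le (by simpa [S] using (card_roots' p).trans hp)
  have hdeg : p.natDegree = m := le_antisymm hp (by simpa [S, ← hroots] using card_roots' p)
  calc p = C p.leadingCoeff * (p.roots.map fun a => X - C a).prod :=
        (C_leadingCoeff_mul_prod_multiset_X_sub_C (by rw [← hroots, hdeg]; simp [S])).symm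
    _ = C (p.coeff m) * ∏ i ∈ range m, (X - C (r i)) := by
        rw [← hroots, leadingCoeff, hdeg, Multiset.map_map, prod_eq_multiset_prod]
        rfl

section OrderedRoots

variable {R : Type*} [CommRing R] [LinearOrder R] [IsStrictOrderedRing R]

theorem neg_one_pow_mul_prod_pos {S : Finset ℕ} {g : ℕ → R} {k : ℕ} (hk : range k ⊆ S)
    (hneg : ∀ j < k, g j < 0) (hpos : ∀ j ∈ S, k ≤ j → 0 < g j) :
    0 < (-1) ^ k * ∏ j ∈ S, g j := by
  have hneg_prod : 0 < (-1) ^ k * ∏ j ∈ range k, g j := by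
    have := prod_pos fun j (hj : j ∈ range k) => neg_pos.2 (hneg j (mem_range.1 hj))
    rwa [prod_neg, card_range] at this
  rw [← prod_sdiff hk, mul_left_comm]
  refine mul_pos (prod_pos fun j hj => ?_) hneg_prod
  rw [Finset.mem_sdiff, mem_range, not_lt] at hj
  exact hpos j hj.1 hj.2

theorem neg_one_pow_mul_eval_prod_pos {a : ℕ → R} {m k : ℕ} {x : R}
    (ha : AntitoneOn a (Set.Iio m)) (hk : k < m) (hx : x ∈ Set.Ioo (a (k + 1)) (a k)) :
    0 < (-1) ^ (k + 1) * (∏ j ∈ range m, (X - C (a j))).eval x := by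
  rw [eval_prod]
  refine neg_one_pow_mul_prod_pos (range_subset_range.2 hk) (fun j hj => ?_) (fun j hj hkj => ?_)
  · simpa using hx.2.trans_le (ha (show j < m by omega) (show k < m from hk) (by omega))
  · have hj : j < m := mem_range.1 hj
    simpa using (ha (show k + 1 < m by omega) hj hkj).trans_lt hx.1

theorem neg_one_pow_mul_eval_derivative_prod_pos {a : ℕ → R} {m k : ℕ}
    (ha : StrictAntiOn a (Set.Iio m)) (hk : k < m) :
    0 < (-1) ^ k * (derivative (∏ j ∈ range m, (X - C (a j)))).eval (a k) := by
  rw [eval_derivative_prod_X_sub_C (mem_range.2 hk)]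
  refine neg_one_pow_mul_prod_pos (fun j hj => ?_) (fun j hj => ?_) (fun j hj hkj => ?_)
  · rw [mem_range] at hj
    exact mem_erase.2 ⟨hj.ne, mem_range.2 (hj.trans hk)⟩
  · exact sub_neg.2 (ha (show j < m by omega) (show k < m from hk) hj)
  · obtain ⟨hjk, hj⟩ := mem_erase.1 hj
    exact sub_pos.2 (ha (show k < m from hk) (mem_range.1 hj) (lt_of_le_of_ne hkj hjk.symm))

end OrderedRoots

theorem strictAntiOn_of_mem_Ioo {α : Type*} [Preorder α] {v r : ℕ → α} {m : ℕ}
    (hr : ∀ k < m, r k ∈ Set.Ioo (v (k + 1)) (v k)) : StrictAntiOn r (Set.Iio m) := by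
  have hv : StrictAntiOn v (Set.Iic m) :=
    strictAntiOn_Iic_of_succ_lt fun k hk => (hr k hk).1.trans (hr k hk).2
  intro i hi j hj hij
  have hj : j < m := hj
  calc r j < v j := (hr j hj).2
    _ ≤ v (i + 1) := hv.antitoneOn (show i + 1 ≤ m by omega) (show j ≤ m by omega) hij
    _ < r i := (hr i hi).1

theorem exists_mem_Ioo_eq_zero_of_alternating {g : ℝ → ℝ} (hg : Continuous g) {v : ℕ → ℝ}
    {m : ℕ} (hv : ∀ k < m, v (k + 1) < v k) (hsign : ∀ k ≤ m, 0 < (-1) ^ k * g (v k)) :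
    ∃ r : ℕ → ℝ, ∀ k < m, r k ∈ Set.Ioo (v (k + 1)) (v k) ∧ g (r k) = 0 := by
  have hivt : ∀ k < m, ∃ c ∈ Set.Ioo (v (k + 1)) (v k), g c = 0 := by
    intro k hk
    have hlt : (-1) ^ k * g (v (k + 1)) < 0 := by
      have := hsign (k + 1) hk
      rw [pow_succ, mul_neg_one, neg_mul] at this
      linarith
    obtain ⟨c, hc, hc0⟩ := intermediate_value_Ioo (hv k hk).le
      (hg.const_smul ((-1 : ℝ) ^ k)).continuousOn ⟨hlt, hsign k hk.le⟩
    exact ⟨c, hc, by simpa using hc0⟩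
  choose! r hr using hivt
  exact ⟨r, hr⟩

theorem exists_strictAntiOn_zeros_of_alternating {g : ℝ → ℝ} (hg : Continuous g) {u : ℕ → ℝ}
    {m : ℕ} (hu : ∀ k < m, u (k + 1) < u k) (hsign : ∀ k ≤ m, 0 < (-1) ^ k * g (u k))
    (hbot : ∀ᶠ x in atBot, 0 < (-1) ^ (m + 1) * g x) :
    ∃ r : ℕ → ℝ, StrictAntiOn r (Set.Iio (m + 1)) ∧ ∀ k ≤ m, r k < u 0 ∧ g (r k) = 0 := by
  obtain ⟨w, hwu, hw⟩ := ((eventually_lt_atBot (u m)).and hbot).exists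
  set v : ℕ → ℝ := fun k => if k ≤ m then u k else w with hv_def
  have hv : ∀ k < m + 1, v (k + 1) < v k := by
    intro k hk
    by_cases hkm : k + 1 ≤ m
    · simpa [hv_def, hkm, hkm.trans' k.le_succ] using hu k hkm
    · simpa [hv_def, hkm, show k = m by omega] using hwu
  have hvsign : ∀ k ≤ m + 1, 0 < (-1) ^ k * g (v k) := by
    intro k hk
    by_cases hkm : k ≤ m
    · simpa [hv_def, hkm] using hsign k hkm
    · simpa [hv_def, hkm, show k = m + 1 by omega] using hw
  obtain ⟨r, hr⟩ := exists_mem_Ioo_eq_zero_of_alternating hg hv hvsign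
  have hr_anti := strictAntiOn_of_mem_Ioo fun k hk => (hr k hk).1
  refine ⟨r, hr_anti, fun k hk => ⟨?_, (hr k (Nat.lt_succ_of_le hk)).2⟩⟩
  calc r k ≤ r 0 := hr_anti.antitoneOn (by simp) (by simpa using Nat.lt_succ_of_le hk) k.zero_le
    _ < v 0 := (hr 0 m.succ_pos).1.2
    _ = u 0 := by simp [hv_def]

theorem Polynomial.eventually_atBot_neg_one_pow_mul_eval_pos {p : ℝ[X]}
    (hp : 0 < p.leadingCoeff) : ∀ᶠ x in atBot, 0 < (-1) ^ p.natDegree * p.eval x := by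
  have hequiv := (Asymptotics.IsEquivalent.refl (u := fun _ : ℝ => (-1 : ℝ) ^ p.natDegree)).mul
    p.isEquivalent_atBot_lead
  refine hequiv.eventually_pos ((eventually_lt_atBot 0).mono fun x hx => ?_)
  rw [Pi.mul_apply, mul_left_comm, ← mul_pow, neg_one_mul]
  exact mul_pos hp (pow_pos (neg_pos.2 hx) _)

theorem Polynomial.exists_mem_Ioo_isRoot_derivative {p : ℝ[X]} {s : ℕ → ℝ} {m : ℕ}
    (hs : ∀ k < m, s (k + 1) < s k) (hroot : ∀ k ≤ m, p.IsRoot (s k)) :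
    ∃ t : ℕ → ℝ, ∀ k < m, t k ∈ Set.Ioo (s (k + 1)) (s k) ∧ p.derivative.IsRoot (t k) := by
  have hrolle : ∀ k < m, ∃ c ∈ Set.Ioo (s (k + 1)) (s k), p.derivative.IsRoot c := by
    intro k hk
    obtain ⟨c, hc, hc'⟩ := exists_deriv_eq_zero (hs k hk) p.continuousOn
      ((hroot (k + 1) hk).trans (hroot k hk.le).symm)
    exact ⟨c, hc, by rwa [Polynomial.deriv] at hc'⟩
  choose! t ht using hrolle
  exact ⟨t, ht⟩

theorem Polynomial.exists_derivative_prod_X_sub_C_eq {s : ℕ → ℝ} {m : ℕ}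
    (hs : StrictAntiOn s (Set.Iio (m + 1))) :
    ∃ t : ℕ → ℝ, (∀ k < m, t k ∈ Set.Ioo (s (k + 1)) (s k) ∧
        (derivative (∏ i ∈ range (m + 1), (X - C (s i)))).IsRoot (t k)) ∧
      derivative (∏ i ∈ range (m + 1), (X - C (s i))) =
        C ((m : ℝ) + 1) * ∏ k ∈ range m, (X - C (t k)) := by
  set f := ∏ i ∈ range (m + 1), (X - C (s i))
  have hf_monic : f.Monic := monic_prod_of_monic _ _ fun i _ => monic_X_sub_C (s i)
  have hf_deg : f.natDegree = m + 1 := by simp [f]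
  obtain ⟨t, ht⟩ := exists_mem_Ioo_isRoot_derivative (p := f) (m := m)
    (fun k hk => hs (show k < m + 1 by omega) (show k + 1 < m + 1 by omega) k.lt_succ_self)
    fun k hk => by
      rw [IsRoot.def, eval_prod]
      exact prod_eq_zero (i := k) (mem_range.2 (by omega)) (by simp)
  refine ⟨t, ht, ?_⟩
  rw [eq_C_coeff_mul_prod_of_isRoot (by simp [hf_deg])
      (strictAntiOn_of_mem_Ioo fun k hk => (ht k hk).1).injOn fun k hk => (ht k hk).2,
    coeff_derivative, ← hf_deg, hf_monic.coeff_natDegree, one_mul]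

noncomputable def jacobiStirlingOp (γ : ℝ) (p : ℝ[X]) : ℝ[X] :=
  p + C (2 * γ) * derivative p + X * derivative (derivative p)

section jacobiStirlingOp

variable (γ : ℝ) (p : ℝ[X])

@[simp]
theorem eval_jacobiStirlingOp (x : ℝ) :
    (jacobiStirlingOp γ p).eval x =
      p.eval x + 2 * γ * p.derivative.eval x + x * p.derivative.derivative.eval x := by
  simp [jacobiStirlingOp]

theorem coeff_jacobiStirlingOp (k : ℕ) :
    (jacobiStirlingOp γ p).coeff k = p.coeff k + (k + 1) * (k + 2 * γ) * p.coeff (k + 1) := by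
  rcases k with _ | k
  · simp [jacobiStirlingOp, coeff_derivative]
  · simp only [jacobiStirlingOp, coeff_add, coeff_C_mul, coeff_X_mul, coeff_derivative]
    push_cast
    ring

theorem natDegree_jacobiStirlingOp_le : (jacobiStirlingOp γ p).natDegree ≤ p.natDegree := by
  refine natDegree_le_iff_coeff_eq_zero.2 fun k hk => ?_
  rw [coeff_jacobiStirlingOp, coeff_eq_zero_of_natDegree_lt (by exact_mod_cast hk),
    coeff_eq_zero_of_natDegree_lt (by omega)]
  ring

theorem coeff_natDegree_jacobiStirlingOp :
    (jacobiStirlingOp γ p).coeff p.natDegree = p.leadingCoeff := by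
  rw [coeff_jacobiStirlingOp, coeff_eq_zero_of_natDegree_lt (Nat.lt_succ_self _), mul_zero,
    add_zero, leadingCoeff]

variable {p} in
theorem natDegree_jacobiStirlingOp (hp : p ≠ 0) :
    (jacobiStirlingOp γ p).natDegree = p.natDegree :=
  natDegree_eq_of_le_of_coeff_ne_zero (natDegree_jacobiStirlingOp_le γ p)
    (by rwa [coeff_natDegree_jacobiStirlingOp, leadingCoeff_ne_zero])

theorem leadingCoeff_jacobiStirlingOp :
    (jacobiStirlingOp γ p).leadingCoeff = p.leadingCoeff := by
  rcases eq_or_ne p 0 with rfl | hp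
  · simp [jacobiStirlingOp]
  · rw [leadingCoeff, natDegree_jacobiStirlingOp γ hp, coeff_natDegree_jacobiStirlingOp]

variable {γ p}

theorem eval_zero_jacobiStirlingOp_pos (hγ : 0 < γ) (hp : 0 ≤ p.eval 0)
    (hp' : 0 < p.derivative.eval 0) : 0 < (jacobiStirlingOp γ p).eval 0 := by
  rw [eval_jacobiStirlingOp, zero_mul, add_zero]
  positivity

theorem neg_one_pow_mul_eval_jacobiStirlingOp_pos {x : ℝ} {k : ℕ} (hx : x < 0)
    (hp' : p.derivative.IsRoot x) (hp : 0 < (-1) ^ (k + 1) * p.eval x)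
    (hp'' : 0 < (-1) ^ k * p.derivative.derivative.eval x) :
    0 < (-1) ^ (k + 1) * (jacobiStirlingOp γ p).eval x := by
  have hsplit : (-1) ^ (k + 1) * (jacobiStirlingOp γ p).eval x =
      (-1) ^ (k + 1) * p.eval x + -x * ((-1) ^ k * p.derivative.derivative.eval x) := by
    rw [eval_jacobiStirlingOp, hp'.eq_zero, pow_succ]
    ring
  rw [hsplit]
  exact add_pos hp (mul_pos (neg_pos.2 hx) hp'')

end jacobiStirlingOp

theorem exists_strictAntiOn_neg_roots_jacobiStirlingOp {γ : ℝ} (hγ : 0 < γ) {M : ℕ}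
    {s : ℕ → ℝ} (hs : StrictAntiOn s (Set.Iio M)) (hs0 : ∀ i < M, s i ≤ 0) :
    ∃ r : ℕ → ℝ, StrictAntiOn r (Set.Iio M) ∧ (∀ i < M, r i < 0) ∧
      jacobiStirlingOp γ (∏ i ∈ range M, (X - C (s i))) = ∏ i ∈ range M, (X - C (r i)) := by
  rcases M with _ | m
  · exact ⟨s, hs, by simp, by simp [jacobiStirlingOp]⟩
  set f := ∏ i ∈ range (m + 1), (X - C (s i))
  have hf_monic : f.Monic := monic_prod_of_monic _ _ fun i _ => monic_X_sub_C (s i)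
  obtain ⟨t, ht, hf'⟩ := exists_derivative_prod_X_sub_C_eq hs
  have ht_anti := strictAntiOn_of_mem_Ioo fun k hk => (ht k hk).1
  have ht_neg : ∀ k < m, t k < 0 := fun k hk => (ht k hk).1.2.trans_le (hs0 k (by omega))
  have hf_sign : ∀ k < m, 0 < (-1) ^ (k + 1) * f.eval (t k) := fun k hk =>
    neg_one_pow_mul_eval_prod_pos hs.antitoneOn (by omega) (ht k hk).1
  have hf''_sign : ∀ k < m, 0 < (-1) ^ k * f.derivative.derivative.eval (t k) := by
    intro k hk
    rw [hf', derivative_C_mul, eval_mul, eval_C, mul_left_comm]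
    exact mul_pos (by positivity) (neg_one_pow_mul_eval_derivative_prod_pos ht_anti hk)
  have hf_zero : 0 ≤ f.eval 0 := by
    rw [eval_prod]
    exact prod_nonneg fun i hi => by simpa using hs0 i (mem_range.1 hi)
  have hf'_zero : 0 < f.derivative.eval 0 := by
    rw [hf', eval_mul, eval_C, eval_prod]
    exact mul_pos (by positivity) (prod_pos fun k hk => by simpa using ht_neg k (mem_range.1 hk))
  set h := jacobiStirlingOp γ f
  have hh_deg : h.natDegree = m + 1 := by
    rw [natDegree_jacobiStirlingOp γ hf_monic.ne_zero]
    simp [f]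
  have hh_lead : h.leadingCoeff = 1 := by rw [leadingCoeff_jacobiStirlingOp, hf_monic.leadingCoeff]
  have hbot := eventually_atBot_neg_one_pow_mul_eval_pos (p := h) (by rw [hh_lead]; exact one_pos)
  rw [hh_deg] at hbot
  obtain ⟨r, hr_anti, hr⟩ := exists_strictAntiOn_zeros_of_alternating h.continuous
    (u := fun | 0 => 0 | k + 1 => t k) (m := m)
    (by rintro (_ | k) hk
        · exact ht_neg 0 hk
        · exact ht_anti (show k < m by omega) (show k + 1 < m from hk) k.lt_succ_self)
    (by rintro (_ | k) hk
        · simpa only [pow_zero, one_mul] using eval_zero_jacobiStirlingOp_pos hγ hf_zero hf'_zero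
        · exact neg_one_pow_mul_eval_jacobiStirlingOp_pos (ht_neg k hk) (ht k hk).2
            (hf_sign k hk) (hf''_sign k hk))
    hbot
  refine ⟨r, hr_anti, fun i hi => (hr i (by omega)).1, ?_⟩
  rw [eq_C_coeff_mul_prod_of_isRoot hh_deg.le hr_anti.injOn fun i hi => (hr i (by omega)).2,
    ← hh_deg, ← leadingCoeff, hh_lead, C_1, one_mul]

theorem JS_eq_zero_of_lt (γ : ℝ) {n j : ℕ} (h : n < j) : JS γ n j = 0 := by
  induction n generalizing j with
  | zero => obtain ⟨j, rfl⟩ := Nat.exists_eq_add_of_lt h; simp [JS]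
  | succ n ih =>
    obtain ⟨j, rfl⟩ := Nat.exists_eq_succ_of_ne_zero (by omega : j ≠ 0)
    simp [JS, ih (by omega : n < j), ih (by omega : n < j + 1)]

theorem coeff_A (γ : ℝ) (n j : ℕ) : (A γ n).coeff j = JS γ n j := by
  simp only [A, finsetSum_coeff, coeff_C_mul_X_pow, sum_ite_eq, mem_range]
  split_ifs with h
  · rfl
  · exact (JS_eq_zero_of_lt γ (by omega)).symm

theorem A_zero (γ : ℝ) : A γ 0 = 1 := by
  simp [A, JS]

theorem A_succ (γ : ℝ) (n : ℕ) : A γ (n + 1) = X * jacobiStirlingOp γ (A γ n) := by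
  ext (_ | k)
  · simp [coeff_A, JS]
  · rw [coeff_X_mul, coeff_jacobiStirlingOp, coeff_A, coeff_A, coeff_A, JS]
    ring

theorem exists_A_eq_prod {γ : ℝ} (hγ : 0 < γ) (n : ℕ) :
    ∃ s : ℕ → ℝ, StrictAntiOn s (Set.Iio n) ∧ (∀ i < n, s i ≤ 0) ∧
      A γ n = ∏ i ∈ range n, (X - C (s i)) := by
  induction n with
  | zero => exact ⟨0, fun i hi => (Nat.not_lt_zero i hi).elim, by simp, by simp [A_zero]⟩
  | succ n ih =>
    obtain ⟨s, hs, hs0, hA⟩ := ih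
    obtain ⟨r, hr, hr0, hop⟩ := exists_strictAntiOn_neg_roots_jacobiStirlingOp hγ hs hs0
    refine ⟨fun | 0 => 0 | k + 1 => r k, ?_, ?_, ?_⟩
    · rintro (_ | i) hi (_ | j) hj hij
      · exact absurd hij (lt_irrefl 0)
      · exact hr0 j (by simpa using hj)
      · omega
      · exact hr (show i < n by simp at hi; omega) (show j < n by simp at hj; omega) (by omega)
    · rintro (_ | i) hi
      · exact le_rfl
      · exact (hr0 i (by omega)).le
    · rw [A_succ, hA, hop, prod_range_succ']
      simp [mul_comm]

/-- For `γ > 0` and `n ≥ 1`, the polynomial `A_n` has only real (it splits over `ℝ`),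
simple, non-positive zeros, `A_n(0) = 0`, and `A_n` satisfies the recurrence
`A_n(x) = x (A_{n-1}(x) + 2γ A'_{n-1}(x) + x A''_{n-1}(x))`. -/
theorem A_zeros (γ : ℝ) (hγ : 0 < γ) (n : ℕ) (hn : 1 ≤ n) :
    Polynomial.Splits ((A γ n).map (RingHom.id ℝ)) ∧
    (A γ n).roots.Nodup ∧
    (∀ x ∈ (A γ n).roots, x ≤ 0) ∧
    (A γ n).eval 0 = 0 ∧
    A γ n = Polynomial.X * (A γ (n - 1) +
      Polynomial.C (2 * γ) * Polynomial.derivative (A γ (n - 1)) +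
      Polynomial.X * Polynomial.derivative (Polynomial.derivative (A γ (n - 1)))) := by
  obtain ⟨s, hs, hs0, hA⟩ := exists_A_eq_prod hγ n
  have hroots : (A γ n).roots = (range n).val.map s := by
    rw [hA, ← roots_multiset_prod_X_sub_C ((range n).val.map s), Multiset.map_map,
      prod_eq_multiset_prod]
    rfl
  obtain ⟨m, rfl⟩ := Nat.exists_eq_add_of_le' hn
  refine ⟨?_, ?_, ?_, ?_, A_succ γ m⟩
  · rw [Polynomial.map_id, hA]
    exact Splits.prod fun i _ => Splits.X_sub_C (s i)
  · rw [hroots]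
    exact (range _).nodup.map_on fun i hi j hj => hs.injOn (mem_range.1 hi) (mem_range.1 hj)
  · intro x hx
    obtain ⟨i, hi, rfl⟩ := Multiset.mem_map.1 (hroots ▸ hx)
    exact hs0 i (mem_range.1 hi)
  · rw [A_succ, eval_mul, eval_X, zero_mul]
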